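/- Let n ≥ 1 and let t ∈ ℝ be nonzero. Let G : ℙ_n × ℙ_n → ℙ_n be a map satisfying G(A, A) = A for all A ∈ ℙ_n, and such that for all A, B ∈ ℙ_n, G(A, B) = I implies B = A^{1 − 1/t}. Then for all A, B ∈ ℙ_n and X ∈ ℙ_n, if G(A # X^{-1}, B # X^{-1}) = I then X = A ♮_t B; in particular, the equation G(A # X^{-1}, B # X^{-1}) = I has at most one positive definite solution X, namely A ♮_t B. -/

import Mathlib

/-!
Put `C = A # X⁻¹` and `D = B # X⁻¹`. The Riccati equations `C A⁻¹ C = X⁻¹ = D B⁻¹ D` give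
`X = C⁻¹ A C⁻¹ = D⁻¹ B D⁻¹`, and the hypothesis on `G` gives `D = C^{1 - 1/t}`; as powers of `C`
commute, `B = C^{-1/t} A C^{-1/t}`. Since `A⁻¹ # B` is the unique positive definite
solution `Y` of `Y A Y = B`, this forces `A⁻¹ # B = C^{-1/t}`, hence `(A⁻¹ # B)^t = C⁻¹` and
`A ♮_t B = C⁻¹ A C⁻¹ = X`.
-/

open Matrix
open scoped ComplexOrder

/-- Real power `A^t = exp(t · log A)` of a Hermitian positive definite matrix, defined via
the functional calculus (spectral decomposition). -/
noncomputable def mpow {n : ℕ} (A : Matrix (Fin n) (Fin n) ℂ) (t : ℝ) :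
    Matrix (Fin n) (Fin n) ℂ :=
  if hA : A.IsHermitian then
    (hA.eigenvectorUnitary : Matrix (Fin n) (Fin n) ℂ) *
      Matrix.diagonal (fun i => ((hA.eigenvalues i ^ t : ℝ) : ℂ)) *
      (star (hA.eigenvectorUnitary : Matrix (Fin n) (Fin n) ℂ))
  else A

/-- Logarithm of a Hermitian positive definite matrix via the functional calculus. -/
noncomputable def mlog {n : ℕ} (A : Matrix (Fin n) (Fin n) ℂ) : Matrix (Fin n) (Fin n) ℂ :=
  if hA : A.IsHermitian then
    (hA.eigenvectorUnitary : Matrix (Fin n) (Fin n) ℂ) *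
      Matrix.diagonal (fun i => ((Real.log (hA.eigenvalues i) : ℝ) : ℂ)) *
      (star (hA.eigenvectorUnitary : Matrix (Fin n) (Fin n) ℂ))
  else A

/-- Metric geometric mean `A # B = A^{1/2} (A^{-1/2} B A^{-1/2})^{1/2} A^{1/2}`. -/
noncomputable def geomMean {n : ℕ} (A B : Matrix (Fin n) (Fin n) ℂ) :
    Matrix (Fin n) (Fin n) ℂ :=
  mpow A (1/2) * mpow (mpow A (-(1/2)) * B * mpow A (-(1/2))) (1/2) * mpow A (1/2)

/-- Weighted spectral geometric mean `A ♮_t B = (A⁻¹ # B)^t A (A⁻¹ # B)^t`. -/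
noncomputable def spectralMean {n : ℕ} (t : ℝ) (A B : Matrix (Fin n) (Fin n) ℂ) :
    Matrix (Fin n) (Fin n) ℂ :=
  mpow (geomMean A⁻¹ B) t * A * mpow (geomMean A⁻¹ B) t

variable {n : ℕ} {A B M X : Matrix (Fin n) (Fin n) ℂ}

lemma mpow_eq_cfc (hA : A.IsHermitian) (t : ℝ) : mpow A t = cfc (· ^ t : ℝ → ℝ) A := by
  rw [hA.cfc_eq, mpow, dif_pos hA]
  rfl

lemma posDef_mpow (hA : A.PosDef) (t : ℝ) : (mpow A t).PosDef := by
  rw [mpow, dif_pos hA.1, Matrix.IsUnit.posDef_star_right_conjugate_iff Unitary.isUnit_coe,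
    posDef_diagonal_iff]
  exact fun i => mod_cast Real.rpow_pos_of_pos (hA.eigenvalues_pos i) t

lemma Matrix.PosDef.pos_of_mem_spectrum {ι 𝕜 : Type*} [Fintype ι] [DecidableEq ι] [RCLike 𝕜]
    {A : Matrix ι ι 𝕜} (hA : A.PosDef) {x : ℝ} (hx : x ∈ spectrum ℝ A) : 0 < x := by
  obtain ⟨i, rfl⟩ := hA.1.spectrum_real_eq_range_eigenvalues ▸ hx
  exact hA.eigenvalues_pos i

lemma Matrix.PosDef.inv_inv {ι K : Type*} [Fintype ι] [DecidableEq ι] [Field K] [PartialOrder K]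
    [StarRing K] {A : Matrix ι ι K} (hA : A.PosDef) : A⁻¹⁻¹ = A :=
  nonsing_inv_nonsing_inv A ((isUnit_iff_isUnit_det A).mp hA.isUnit)

lemma mpow_add (hA : A.PosDef) (s u : ℝ) : mpow A (s + u) = mpow A s * mpow A u := by
  have : IsSelfAdjoint A := hA.1
  rw [mpow_eq_cfc hA.1, mpow_eq_cfc hA.1, mpow_eq_cfc hA.1,
    ← cfc_mul _ _ A (finite_real_spectrum.continuousOn _) (finite_real_spectrum.continuousOn _)]
  exact cfc_congr fun x hx => Real.rpow_add (hA.pos_of_mem_spectrum hx) s u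

lemma mpow_zero (hA : A.IsHermitian) : mpow A 0 = 1 := by
  have : IsSelfAdjoint A := hA
  simp only [mpow_eq_cfc hA, Real.rpow_zero]
  exact cfc_const_one ℝ A

lemma mpow_one (hA : A.IsHermitian) : mpow A 1 = A := by
  have : IsSelfAdjoint A := hA
  simp only [mpow_eq_cfc hA, Real.rpow_one]
  exact cfc_id' ℝ A

lemma mpow_mul (hA : A.PosDef) (s u : ℝ) : mpow A (s * u) = mpow (mpow A s) u := by
  have : IsSelfAdjoint A := hA.1
  rw [mpow_eq_cfc (posDef_mpow hA s).1, mpow_eq_cfc hA.1, mpow_eq_cfc hA.1,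
    ← cfc_comp (· ^ u) (· ^ s) A this ((finite_real_spectrum.image _).continuousOn _)
      (finite_real_spectrum.continuousOn _)]
  exact cfc_congr fun x hx => Real.rpow_mul (hA.pos_of_mem_spectrum hx).le s u

lemma mpow_neg (hA : A.PosDef) (s : ℝ) : mpow A (-s) = (mpow A s)⁻¹ := by
  refine (Matrix.inv_eq_right_inv ?_).symm
  rw [← mpow_add hA, add_neg_cancel, mpow_zero hA.1]

lemma mpow_neg_one (hA : A.PosDef) : mpow A (-1) = A⁻¹ := by
  rw [mpow_neg hA, mpow_one hA.1]

lemma posDef_mpow_conj (hA : A.PosDef) (hM : M.PosDef) (t : ℝ) :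
    (mpow A t * M * mpow A t).PosDef := by
  have h := (Matrix.IsUnit.posDef_star_right_conjugate_iff (posDef_mpow hA t).isUnit).2 hM
  rwa [Matrix.star_eq_conjTranspose, (posDef_mpow hA t).1.eq] at h

lemma mpow_conj_mpow_conj (hA : A.PosDef) (a b : ℝ) :
    mpow A a * (mpow A b * M * mpow A b) * mpow A a = mpow A (a + b) * M * mpow A (a + b) := by
  have hcomm : mpow A a * mpow A b = mpow A b * mpow A a := by
    rw [← mpow_add hA, ← mpow_add hA, add_comm]
  rw [mpow_add hA]
  nth_rewrite 2 [hcomm]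
  simp only [Matrix.mul_assoc]

lemma mpow_conj_eq_iff (hA : A.PosDef) (a : ℝ) :
    mpow A a * M * mpow A a = X ↔ M = mpow A (-a) * X * mpow A (-a) := by
  constructor <;> rintro rfl
  · rw [mpow_conj_mpow_conj hA, neg_add_cancel, mpow_zero hA.1, Matrix.one_mul, Matrix.mul_one]
  · rw [mpow_conj_mpow_conj hA, add_neg_cancel, mpow_zero hA.1, Matrix.one_mul, Matrix.mul_one]

lemma mpow_conj_inj (hA : A.PosDef) (a : ℝ) :
    mpow A a * M * mpow A a = mpow A a * X * mpow A a ↔ M = X := by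
  rw [mpow_conj_eq_iff hA, mpow_conj_mpow_conj hA, neg_add_cancel, mpow_zero hA.1,
    Matrix.one_mul, Matrix.mul_one]

lemma mpow_half_mul_self (hM : M.PosDef) : mpow M (1 / 2) * mpow M (1 / 2) = M := by
  rw [← mpow_add hM]
  norm_num [mpow_one hM.1]

lemma mpow_half_eq_of_mul_self_eq (hX : X.PosDef) (h : X * X = M) : mpow M (1 / 2) = X := by
  rw [← h, ← mpow_one hX.1, ← mpow_add hX, ← mpow_mul hX]
  norm_num [mpow_one hX.1]

lemma posDef_geomMean (hA : A.PosDef) (hB : B.PosDef) : (geomMean A B).PosDef :=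
  posDef_mpow_conj hA (posDef_mpow (posDef_mpow_conj hA hB _) _) _

lemma mpow_conj_geomMean (hA : A.PosDef) :
    mpow A (-(1 / 2)) * geomMean A B * mpow A (-(1 / 2)) =
      mpow (mpow A (-(1 / 2)) * B * mpow A (-(1 / 2))) (1 / 2) := by
  rw [mpow_conj_eq_iff hA, neg_neg, geomMean]

-- Conjugation by `A^{-1/2}` turns the Riccati equation `X A⁻¹ X = B` into a square-root equation.
lemma mpow_conj_mul_inv_mul (hA : A.PosDef) :
    mpow A (-(1 / 2)) * (X * A⁻¹ * X) * mpow A (-(1 / 2)) =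
      (mpow A (-(1 / 2)) * X * mpow A (-(1 / 2))) *
        (mpow A (-(1 / 2)) * X * mpow A (-(1 / 2))) := by
  have hinv : A⁻¹ = mpow A (-(1 / 2)) * mpow A (-(1 / 2)) := by
    rw [← mpow_add hA, ← mpow_neg_one hA]
    norm_num
  rw [hinv]
  simp only [Matrix.mul_assoc]

lemma geomMean_mul_inv_mul_geomMean (hA : A.PosDef) (hB : B.PosDef) :
    geomMean A B * A⁻¹ * geomMean A B = B := by
  rw [← mpow_conj_inj hA (-(1 / 2)), mpow_conj_mul_inv_mul hA, mpow_conj_geomMean hA,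
    mpow_half_mul_self (posDef_mpow_conj hA hB _)]

lemma eq_geomMean_of_mul_inv_mul_eq (hA : A.PosDef) (hX : X.PosDef)
    (h : X * A⁻¹ * X = B) : X = geomMean A B := by
  rw [← mpow_conj_inj hA (-(1 / 2)), mpow_conj_geomMean hA, ← h, mpow_conj_mul_inv_mul hA,
    mpow_half_eq_of_mul_self_eq (posDef_mpow_conj hA hX _) rfl]

lemma inv_geomMean_mul_mul_inv_geomMean (hA : A.PosDef) (hB : B.PosDef) :
    (geomMean A B)⁻¹ * A * (geomMean A B)⁻¹ = B⁻¹ := by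
  conv_rhs => rw [← geomMean_mul_inv_mul_geomMean hA hB]
  simp only [Matrix.mul_inv_rev, hA.inv_inv, Matrix.mul_assoc]

theorem spectralMean_unique_solution_of_mean_general {n : ℕ} (t : ℝ) (ht : t ≠ 0)
    (G : Matrix (Fin n) (Fin n) ℂ → Matrix (Fin n) (Fin n) ℂ → Matrix (Fin n) (Fin n) ℂ)
    (hGone : ∀ A B : Matrix (Fin n) (Fin n) ℂ, A.PosDef → B.PosDef →
      G A B = 1 → B = mpow A (1 - 1 / t)) :
    ∀ A B X : Matrix (Fin n) (Fin n) ℂ, A.PosDef → B.PosDef → X.PosDef →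
      G (geomMean A X⁻¹) (geomMean B X⁻¹) = 1 → X = spectralMean t A B := by
  intro A B X hA hB hX hsol
  set C := geomMean A X⁻¹
  have hC : C.PosDef := posDef_geomMean hA hX.inv
  have hD : geomMean B X⁻¹ = mpow C (1 - 1 / t) :=
    hGone _ _ hC (posDef_geomMean hB hX.inv) hsol
  have hXA : mpow C (-1) * A * mpow C (-1) = X := by
    rw [mpow_neg_one hC, inv_geomMean_mul_mul_inv_geomMean hA hX.inv, hX.inv_inv]
  have hXB : mpow C (-(1 - 1 / t)) * B * mpow C (-(1 - 1 / t)) = X := by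
    rw [mpow_neg hC, ← hD, inv_geomMean_mul_mul_inv_geomMean hB hX.inv, hX.inv_inv]
  have hBA : mpow C (-(1 / t)) * A * mpow C (-(1 / t)) = B := by
    rw [mpow_conj_eq_iff hC, ← hXA, mpow_conj_mpow_conj hC] at hXB
    rw [hXB, show -(-(1 - 1 / t)) + -1 = -(1 / t) by ring]
  have hmean : mpow C (-(1 / t)) = geomMean A⁻¹ B :=
    eq_geomMean_of_mul_inv_mul_eq hA.inv (posDef_mpow hC _) (by rwa [hA.inv_inv])
  rw [spectralMean, ← hmean, ← mpow_mul hC, neg_mul, one_div_mul_cancel ht, hXA]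

theorem spectralMean_unique_solution_of_mean {n : ℕ} (hn : 1 ≤ n) (t : ℝ) (ht : t ≠ 0)
    (G : Matrix (Fin n) (Fin n) ℂ → Matrix (Fin n) (Fin n) ℂ → Matrix (Fin n) (Fin n) ℂ)
    (hGpos : ∀ A B : Matrix (Fin n) (Fin n) ℂ, A.PosDef → B.PosDef → (G A B).PosDef)
    (hGidem : ∀ A : Matrix (Fin n) (Fin n) ℂ, A.PosDef → G A A = A)
    (hGone : ∀ A B : Matrix (Fin n) (Fin n) ℂ, A.PosDef → B.PosDef →
      G A B = 1 → B = mpow A (1 - 1 / t)) :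
    ∀ A B X : Matrix (Fin n) (Fin n) ℂ, A.PosDef → B.PosDef → X.PosDef →
      G (geomMean A X⁻¹) (geomMean B X⁻¹) = 1 → X = spectralMean t A B :=
  spectralMean_unique_solution_of_mean_general t ht G hGone
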